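/- Let t₁, t₂ > 0, t₁ ≠ t₂, and define A : (0,1] → [1,∞) by A(f₀) = 1 + (t₁ f₀^{-1/t₁} − t₂ f₀^{-1/t₂})/(t₂ − t₁). Then A is continuous on (0,1], and its inverse A^{-1} : [1,∞) → (0,1] is continuous and strictly decreasing. -/

import Mathlib

/-!
The derivative of `A` at `f₀` is the slope, between `t₁` and `t₂`, of `t ↦ f₀ ^ (-1/t - 1)`,
which is strictly decreasing in `t` when `f₀ < 1`; so `A` is strictly decreasing on `(0, 1]`
whatever the order of `t₁` and `t₂`. Its inverse `B` is then strictly decreasing too and maps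
`[1, ∞)` onto the interval `(0, B 1]`, and a monotone function whose image is an interval has
no jumps.
-/

open Real Set Topology

section MonotoneInverse

variable {α β : Type*} [LinearOrder α] [LinearOrder β]

theorem StrictAntiOn.strictAntiOn_of_rightInvOn {A : α → β} {B : β → α} {s : Set α} {t : Set β}
    (hA : StrictAntiOn A s) (hB : MapsTo B t s) (hinv : RightInvOn B A t) : StrictAntiOn B t :=
  fun r hr r' hr' hrr' => by
    rwa [← hA.lt_iff_gt (hB hr) (hB hr'), hinv hr, hinv hr']

theorem AntitoneOn.image_Ici_eq_Ioc {A : α → β} {B : β → α} {a b : α} {c : β}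
    (hA : AntitoneOn A (Ioc a b)) (hB : AntitoneOn B (Ici c)) (hBmaps : MapsTo B (Ici c) (Ioc a b))
    (hleft : LeftInvOn B A (Ioc a b)) (hright : RightInvOn B A (Ici c)) :
    B '' Ici c = Ioc a (B c) := by
  have hBc : B c ∈ Ioc a b := hBmaps self_mem_Ici
  ext y
  constructor
  · rintro ⟨r, hr, rfl⟩
    exact ⟨(hBmaps hr).1, hB self_mem_Ici hr hr⟩
  · rintro ⟨hay, hyc⟩
    have hy : y ∈ Ioc a b := ⟨hay, hyc.trans hBc.2⟩
    refine ⟨A y, ?_, hleft hy⟩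
    calc c = A (B c) := (hright self_mem_Ici).symm
      _ ≤ A y := hA hy hBc hyc

end MonotoneInverse

theorem StrictAntiOn.continuousOn_Ici_of_image_eq_Ioc {α β : Type*} [LinearOrder α]
    [TopologicalSpace α] [OrderTopology α] [LinearOrder β] [TopologicalSpace β] [OrderTopology β]
    [DenselyOrdered β] {f : α → β} {a : α} {m : β}
    (hf : StrictAntiOn f (Ici a)) (himage : f '' Ici a = Ioc m (f a)) :
    ContinuousOn f (Ici a) := by
  have hmem : ∀ x ∈ Ici a, f x ∈ Ioc m (f a) := fun x hx => himage ▸ mem_image_of_mem f hx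
  intro x hx
  rcases (mem_Ici.1 hx).eq_or_lt with rfl | hax
  · have h := hf.dual_right.continuousWithinAt_right_of_image_mem_nhdsWithin self_mem_nhdsWithin
      (by change f '' Ici a ∈ 𝓝[≤] f a; rw [himage]; exact Ioc_mem_nhdsLE (hmem a hx).1)
    exact continuous_ofDual.continuousAt.comp_continuousWithinAt h
  · refine (continuous_ofDual.continuousAt.comp ?_).continuousWithinAt
    refine hf.dual_right.continuousAt_of_image_mem_nhds (Ici_mem_nhds hax) ?_
    change f '' Ici a ∈ 𝓝 (f x)
    rw [himage]
    exact Ioc_mem_nhds (hmem x hx).1 (hf self_mem_Ici hx hax)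

noncomputable def superlevelArea (t₁ t₂ f₀ : ℝ) : ℝ :=
  1 + (t₁ * f₀ ^ (-(1 / t₁)) - t₂ * f₀ ^ (-(1 / t₂))) / (t₂ - t₁)

theorem continuousOn_superlevelArea (t₁ t₂ : ℝ) : ContinuousOn (superlevelArea t₁ t₂) (Ioi 0) :=
  fun x hx => by
    have hx0 : x ≠ 0 := hx.ne'
    unfold superlevelArea
    fun_prop (disch := exact Or.inl hx0)

theorem hasDerivAt_mul_rpow_neg_inv {t x : ℝ} (ht : t ≠ 0) (hx : x ≠ 0) :
    HasDerivAt (fun y => t * y ^ (-(1 / t))) (-x ^ (-(1 / t) - 1)) x := by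
  refine ((hasDerivAt_rpow_const (p := -(1 / t)) (Or.inl hx)).const_mul t).congr_deriv ?_
  field_simp

theorem hasDerivAt_superlevelArea {t₁ t₂ x : ℝ} (h₁ : t₁ ≠ 0) (h₂ : t₂ ≠ 0) (hx : x ≠ 0) :
    HasDerivAt (superlevelArea t₁ t₂)
      (slope (fun t : ℝ => x ^ (-(1 / t) - 1)) t₁ t₂) x := by
  rw [slope_def_field]
  refine ((((hasDerivAt_mul_rpow_neg_inv h₁ hx).sub
    (hasDerivAt_mul_rpow_neg_inv h₂ hx)).div_const (t₂ - t₁)).const_add 1).congr_deriv ?_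
  ring

theorem strictAntiOn_rpow_neg_inv_sub_one {x : ℝ} (hx₀ : 0 < x) (hx₁ : x < 1) :
    StrictAntiOn (fun t : ℝ => x ^ (-(1 / t) - 1)) (Ioi 0) := fun _ ha _ _ hab =>
  rpow_lt_rpow_of_exponent_gt hx₀ hx₁ (by linarith [one_div_lt_one_div_of_lt ha hab])

theorem strictAntiOn_superlevelArea {t₁ t₂ : ℝ} (h₁ : 0 < t₁) (h₂ : 0 < t₂) (hne : t₁ ≠ t₂) :
    StrictAntiOn (superlevelArea t₁ t₂) (Ioc 0 1) := by
  refine strictAntiOn_of_deriv_neg (convex_Ioc 0 1)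
    ((continuousOn_superlevelArea t₁ t₂).mono Ioc_subset_Ioi_self) fun x hx => ?_
  rw [interior_Ioc] at hx
  rw [(hasDerivAt_superlevelArea h₁.ne' h₂.ne' hx.1.ne').deriv]
  exact (strictAntiOn_rpow_neg_inv_sub_one hx.1 hx.2).slope_neg h₁ h₂ hne

theorem area_continuous_and_inverse (t₁ t₂ : ℝ) (h₁ : 0 < t₁) (h₂ : 0 < t₂)
    (hne : t₁ ≠ t₂)
    (A : ℝ → ℝ)
    (hA : ∀ f₀, A f₀ = 1 + (t₁ * f₀ ^ (-(1 / t₁)) - t₂ * f₀ ^ (-(1 / t₂))) / (t₂ - t₁)) :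
    ContinuousOn A (Set.Ioc 0 1) ∧
    ∀ B : ℝ → ℝ,
      (∀ f₀ ∈ Set.Ioc (0 : ℝ) 1, B (A f₀) = f₀) →
      (∀ r ∈ Set.Ici (1 : ℝ), B r ∈ Set.Ioc (0 : ℝ) 1 ∧ A (B r) = r) →
      ContinuousOn B (Set.Ici 1) ∧ StrictAntiOn B (Set.Ici 1) := by
  obtain rfl : A = superlevelArea t₁ t₂ := funext hA
  have hAanti := strictAntiOn_superlevelArea h₁ h₂ hne
  refine ⟨(continuousOn_superlevelArea t₁ t₂).mono Ioc_subset_Ioi_self, fun B hleft hinv => ?_⟩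
  have hBmaps : MapsTo B (Ici 1) (Ioc 0 1) := fun r hr => (hinv r hr).1
  have hright : RightInvOn B (superlevelArea t₁ t₂) (Ici 1) := fun r hr => (hinv r hr).2
  have hBanti := hAanti.strictAntiOn_of_rightInvOn hBmaps hright
  have himage := hAanti.antitoneOn.image_Ici_eq_Ioc hBanti.antitoneOn hBmaps hleft hright
  exact ⟨hBanti.continuousOn_Ici_of_image_eq_Ioc himage, hBanti⟩
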